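/- Let f : ℝⁿ → ℝ be differentiable with K-Lipschitz gradient, and let x₀, x₁ ∈ ℝⁿ. Then for a one-step perturbation with step size α, |f(x₁ + α·sign(∇f(x₁))) − f(x₁)| ≤ α‖∇f(x₁)‖₁ + (K/2)α²n ≤ α‖∇f(x₀)‖₁ + √n αK‖x₁ − x₀‖₂ + (K/2)α²n. -/

import Mathlib

/-!
Along `t ↦ x + t • h`, the derivative of `f (x + t • h) - f x - t ⟪∇f x, h⟫` is
`⟪∇f (x + t • h) - ∇f x, h⟫`, of size at most `K t ‖h‖²`; comparing with `K t² ‖h‖² / 2`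
gives the descent bound `|f (x + h) - f x - ⟪∇f x, h⟫| ≤ K/2 ‖h‖²`. For the signed step `h = α • sign (∇f x₁)` one has
`⟪∇f x₁, h⟫ = α ‖∇f x₁‖₁` and `‖h‖² ≤ α² n`. The same pairing with a sign vector and
Cauchy–Schwarz give `‖v‖₁ ≤ √n ‖v‖₂`, so `‖∇f x₁‖₁ - ‖∇f x₀‖₁ ≤ √n ‖∇f x₁ - ∇f x₀‖ ≤ √n K ‖x₁ - x₀‖`.
-/

open InnerProductSpace Set

theorem Real.sign_mul_self (x : ℝ) : Real.sign x * x = |x| := by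
  rcases lt_trichotomy x 0 with hx | rfl | hx
  · rw [Real.sign_of_neg hx, abs_of_neg hx, neg_one_mul]
  · simp
  · rw [Real.sign_of_pos hx, abs_of_pos hx, one_mul]

theorem Real.abs_sign_le_one (x : ℝ) : |Real.sign x| ≤ 1 := by
  rcases Real.sign_apply_eq x with h | h | h <;> simp [h]

theorem norm_image_sub_sub_fderiv_le {E F : Type*} [NormedAddCommGroup E] [NormedSpace ℝ E]
    [NormedAddCommGroup F] [NormedSpace ℝ F] {f : E → F} {f' : E → E →L[ℝ] F} {K : ℝ}
    (hf : ∀ y, HasFDerivAt f (f' y) y) (hf' : ∀ u v, ‖f' u - f' v‖ ≤ K * ‖u - v‖) (x h : E) :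
    ‖f (x + h) - f x - f' x h‖ ≤ K / 2 * ‖h‖ ^ 2 := by
  set g : ℝ → F := fun t => f (x + t • h) - f x - t • f' x h
  have hg : ∀ t, HasDerivAt g (f' (x + t • h) h - f' x h) t := by
    intro t
    have hline : HasDerivAt (fun t : ℝ => x + t • h) h t := by
      simpa using ((hasDerivAt_id t).smul_const h).const_add x
    exact ((((hf _).comp_hasDerivAt t hline).sub_const (f x)).sub
      ((hasDerivAt_id t).smul_const (f' x h))).congr_deriv (by simp)
  have hB : ∀ t, HasDerivAt (fun t : ℝ => K / 2 * t ^ 2 * ‖h‖ ^ 2) (K * t * ‖h‖ ^ 2) t :=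
    fun t => (((hasDerivAt_pow 2 t).const_mul (K / 2)).mul_const (‖h‖ ^ 2)).congr_deriv
      (by ring)
  have bound : ∀ t ∈ Ico (0 : ℝ) 1, ‖f' (x + t • h) h - f' x h‖ ≤ K * t * ‖h‖ ^ 2 := by
    intro t ht
    calc ‖f' (x + t • h) h - f' x h‖ = ‖(f' (x + t • h) - f' x) h‖ := rfl
      _ ≤ ‖f' (x + t • h) - f' x‖ * ‖h‖ := ContinuousLinearMap.le_opNorm _ _
      _ ≤ K * ‖t • h‖ * ‖h‖ := by
        gcongr
        simpa using hf' (x + t • h) x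
      _ = K * t * ‖h‖ ^ 2 := by
        rw [norm_smul, Real.norm_of_nonneg ht.1]; ring
  have := image_norm_le_of_norm_deriv_right_le_deriv_boundary
    (fun t _ => (hg t).continuousAt.continuousWithinAt) (fun t _ => (hg t).hasDerivWithinAt)
    (by simp [g]) hB bound (right_mem_Icc.2 zero_le_one)
  simpa [g] using this

theorem abs_sub_sub_inner_gradient_le {E : Type*} [NormedAddCommGroup E] [InnerProductSpace ℝ E]
    [CompleteSpace E] {f : E → ℝ} {K : ℝ} (hf : Differentiable ℝ f)
    (hlip : ∀ u v, ‖gradient f u - gradient f v‖ ≤ K * ‖u - v‖) (x h : E) :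
    |f (x + h) - f x - ⟪gradient f x, h⟫_ℝ| ≤ K / 2 * ‖h‖ ^ 2 :=
  norm_image_sub_sub_fderiv_le (f' := fun y => toDual ℝ E (gradient f y))
    (fun y => (hf y).hasGradientAt.hasFDerivAt)
    (fun u v => by rw [← map_sub, LinearIsometryEquiv.norm_map]; exact hlip u v) x h

theorem nonneg_of_forall_norm_sub_le_mul {E F : Type*} [NormedAddCommGroup E] [Nontrivial E]
    [SeminormedAddCommGroup F] {g : E → F} {K : ℝ} (hg : ∀ u v, ‖g u - g v‖ ≤ K * ‖u - v‖) :
    0 ≤ K := by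
  obtain ⟨u, hu⟩ := exists_ne (0 : E)
  have := (norm_nonneg _).trans (hg u 0)
  rw [sub_zero] at this
  exact nonneg_of_mul_nonneg_left this (norm_pos_iff.2 hu)

section SignVector

variable {ι : Type*}

noncomputable def signVector (v : EuclideanSpace ℝ ι) : EuclideanSpace ℝ ι :=
  (WithLp.equiv 2 (ι → ℝ)).symm fun i => Real.sign (v i)

@[simp]
theorem signVector_apply (v : EuclideanSpace ℝ ι) (i : ι) : signVector v i = Real.sign (v i) :=
  rfl

variable [Fintype ι]

theorem inner_self_signVector (v : EuclideanSpace ℝ ι) :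
    ⟪v, signVector v⟫_ℝ = ∑ i, |v i| := by
  simp [PiLp.inner_apply, Real.sign_mul_self]

theorem norm_signVector_sq_le (v : EuclideanSpace ℝ ι) :
    ‖signVector v‖ ^ 2 ≤ Fintype.card ι := by
  rw [EuclideanSpace.norm_sq_eq]
  calc ∑ i, ‖signVector v i‖ ^ 2 ≤ ∑ _i : ι, (1 : ℝ) := by
        gcongr with i
        rw [signVector_apply, Real.norm_eq_abs, sq_abs, sq_le_one_iff_abs_le_one]
        exact Real.abs_sign_le_one (v i)
    _ = Fintype.card ι := by simp

theorem norm_signVector_le (v : EuclideanSpace ℝ ι) : ‖signVector v‖ ≤ √(Fintype.card ι) :=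
  Real.le_sqrt_of_sq_le (norm_signVector_sq_le v)

theorem sum_abs_le_sqrt_card_mul_norm (v : EuclideanSpace ℝ ι) :
    ∑ i, |v i| ≤ √(Fintype.card ι) * ‖v‖ := by
  rw [← inner_self_signVector, mul_comm]
  calc ⟪v, signVector v⟫_ℝ ≤ ‖v‖ * ‖signVector v‖ := real_inner_le_norm _ _
    _ ≤ ‖v‖ * √(Fintype.card ι) := by gcongr; exact norm_signVector_le v

theorem sum_abs_le_sum_abs_add_sqrt_card_mul_norm_sub (u w : EuclideanSpace ℝ ι) :
    ∑ i, |u i| ≤ ∑ i, |w i| + √(Fintype.card ι) * ‖u - w‖ := by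
  calc ∑ i, |u i| ≤ ∑ i, (|w i| + |(u - w) i|) := by
        gcongr with i
        simpa [add_comm] using abs_sub_abs_le_abs_sub (u i) (w i)
    _ ≤ _ := by
        rw [Finset.sum_add_distrib]
        gcongr
        exact sum_abs_le_sqrt_card_mul_norm (u - w)

theorem abs_image_add_smul_signVector_sub_le {f : EuclideanSpace ℝ ι → ℝ} {K α : ℝ}
    (hf : Differentiable ℝ f) (hlip : ∀ u v, ‖gradient f u - gradient f v‖ ≤ K * ‖u - v‖)
    (hK : 0 ≤ K) (hα : 0 ≤ α) (x : EuclideanSpace ℝ ι) :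
    |f (x + α • signVector (gradient f x)) - f x| ≤
      α * ∑ i, |gradient f x i| + K / 2 * α ^ 2 * Fintype.card ι := by
  set s := signVector (gradient f x)
  set S := ∑ i, |gradient f x i|
  have hinner : ⟪gradient f x, α • s⟫_ℝ = α * S := by
    rw [real_inner_smul_right, inner_self_signVector]
  have hquad : K / 2 * ‖α • s‖ ^ 2 ≤ K / 2 * α ^ 2 * Fintype.card ι := by
    rw [norm_smul, mul_pow, Real.norm_eq_abs, sq_abs, mul_assoc]
    gcongr
    exact norm_signVector_sq_le _
  have hdescent := abs_sub_sub_inner_gradient_le hf hlip x (α • s)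
  rw [hinner] at hdescent
  have hS : 0 ≤ α * S := by positivity
  rw [abs_le] at hdescent ⊢
  constructor <;> linarith [hdescent.1, hdescent.2]

end SignVector

/-- Single-iteration version of Theorem 2: the change of prediction at `x₁` under a
signed-gradient step is bounded by `α‖∇f(x₁)‖₁ + (K/2)α²n`, which in turn is bounded by
the attack sensitivity `α‖∇f(x₀)‖₁` of a neighbor `x₀` plus `√n·α·K·‖x₁ - x₀‖₂`
plus the same second-order term. -/
theorem one_step_attack_change_bound {n : ℕ}
    (f : EuclideanSpace ℝ (Fin n) → ℝ) (K α : ℝ)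
    (hdiff : Differentiable ℝ f) (hα : 0 < α)
    (hlip : ∀ u v : EuclideanSpace ℝ (Fin n),
      ‖gradient f u - gradient f v‖ ≤ K * ‖u - v‖)
    (x₀ x₁ : EuclideanSpace ℝ (Fin n)) :
    |f (x₁ + α • (WithLp.equiv 2 (Fin n → ℝ)).symm (fun i => Real.sign (gradient f x₁ i)))
        - f x₁| ≤ α * (∑ i, |gradient f x₁ i|) + K / 2 * α ^ 2 * n ∧
      α * (∑ i, |gradient f x₁ i|) + K / 2 * α ^ 2 * n ≤
        α * (∑ i, |gradient f x₀ i|) + Real.sqrt n * α * K * ‖x₁ - x₀‖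
          + K / 2 * α ^ 2 * n := by
  constructor
  · rcases Nat.eq_zero_or_pos n with rfl | hn
    · simp [Subsingleton.elim (x₁ + _) x₁]
    · have : NeZero n := ⟨hn.ne'⟩
      have hK : 0 ≤ K := nonneg_of_forall_norm_sub_le_mul hlip
      have hstep := abs_image_add_smul_signVector_sub_le hdiff hlip hK hα.le x₁
      rwa [Fintype.card_fin] at hstep
  · have hsum := sum_abs_le_sum_abs_add_sqrt_card_mul_norm_sub (gradient f x₁) (gradient f x₀)
    rw [Fintype.card_fin] at hsum
    have hsum' : ∑ i, |gradient f x₁ i| ≤ ∑ i, |gradient f x₀ i| + √n * (K * ‖x₁ - x₀‖) :=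
      hsum.trans (by gcongr; exact hlip x₁ x₀)
    calc α * (∑ i, |gradient f x₁ i|) + K / 2 * α ^ 2 * n
        ≤ α * (∑ i, |gradient f x₀ i| + √n * (K * ‖x₁ - x₀‖)) + K / 2 * α ^ 2 * n := by
          gcongr
      _ = _ := by ring
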